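/- Let k be a perfect field with algebraic closure k̄, let {p₁,p₂,p₃} ⊆ ℙ²(k̄) be a Gal(k̄/k)-orbit of size 3 whose three points are not collinear, and let r ∈ ℙ²(k) be a k-rational point. Then the map α ↦ α(r) is a bijection from the subgroup G = {α ∈ PGL₃(k) : α(p_i) = p_i for i = 1,2,3} of PGL₃(k) onto ℙ²(k). -/

import Mathlib

open scoped LinearAlgebra.Projectivization

namespace CremonaPaper

variable {k K : Type} [Field k] [Field K] [Algebra k K]

/-- The coordinatewise action of the Galois group `Gal(K/k)` on the projective space
`ℙ^{n-1}(K)`: an automorphism is applied to the homogeneous coordinates. -/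
noncomputable def galAct {n : ℕ} (g : K ≃ₐ[k] K) (P : ℙ K (Fin n → K)) :
    ℙ K (Fin n → K) :=
  Projectivization.mk K (fun i => g (P.rep i)) (by
    intro h
    apply P.rep_nonzero
    funext i
    have hi : g (P.rep i) = 0 := congrFun h i
    show P.rep i = 0
    exact g.injective (by rw [map_zero]; exact hi))

/-- The action of an invertible matrix on projective space. -/
noncomputable def mulAct {F : Type} [Field F] {n : ℕ} (A : Matrix (Fin n) (Fin n) F)
    (hA : IsUnit A) (P : ℙ F (Fin n → F)) : ℙ F (Fin n → F) :=
  Projectivization.mk F (A.mulVec P.rep) (by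
    intro h
    apply P.rep_nonzero
    have h1 : ((hA.unit⁻¹ : (Matrix (Fin n) (Fin n) F)ˣ) : Matrix (Fin n) (Fin n) F).mulVec
        (A.mulVec P.rep) = 0 := by rw [h, Matrix.mulVec_zero]
    rw [Matrix.mulVec_mulVec] at h1
    have h2 := hA.unit.inv_mul
    rw [hA.unit_spec] at h2
    rw [h2, Matrix.one_mulVec] at h1
    exact h1)

/-- The action of `GL_n(k)` on `ℙ^{n-1}(K)`, via the inclusion `GL_n(k) ⊆ GL_n(K)` given by
the algebra map.  This action factors through `PGL_n(k)`, so that existence statements about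
`PGL_n(k)` translate to existence statements about `GL_n(k)`. -/
noncomputable def glAct {n : ℕ} (M : GL (Fin n) k) (P : ℙ K (Fin n → K)) :
    ℙ K (Fin n → K) :=
  mulAct ((M : Matrix (Fin n) (Fin n) k).map (algebraMap k K))
    (by
      have h : IsUnit ((algebraMap k K).mapMatrix (M : Matrix (Fin n) (Fin n) k)) :=
        (Units.isUnit M).map (algebraMap k K).mapMatrix
      simpa [RingHom.mapMatrix_apply] using h) P

/-- The action of `GL_n(F)` on `ℙ^{n-1}(F)`. -/
noncomputable def glActSelf {F : Type} [Field F] {n : ℕ} (M : GL (Fin n) F)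
    (P : ℙ F (Fin n → F)) : ℙ F (Fin n → F) :=
  mulAct (M : Matrix (Fin n) (Fin n) F) (Units.isUnit M) P

/-- A point of `ℙ^{n-1}(K)` is defined over the intermediate field `F` if it admits a
representative with all homogeneous coordinates in `F`. -/
def DefinedOver {n : ℕ} (F : IntermediateField k K) (P : ℙ K (Fin n → K)) : Prop :=
  ∃ v : Fin n → K, (∀ i, v i ∈ F) ∧ ∃ hv : v ≠ 0, P = Projectivization.mk K v hv

section Aux

variable {k K : Type} [Field k] [Field K] [Algebra k K]

lemma mk_eq_of_eq {n : ℕ} {v w : Fin n → K} (hv : v ≠ 0) (hw : w ≠ 0) (h : v = w) :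
    Projectivization.mk K v hv = Projectivization.mk K w hw := by subst h; rfl

lemma comp_ne_zero {n : ℕ} (g : K ≃ₐ[k] K) {w : Fin n → K} (hw : w ≠ 0) :
    (fun i => g (w i)) ≠ 0 := by
  intro h
  apply hw
  funext i
  have hi : g (w i) = 0 := congrFun h i
  exact g.injective (by simpa using hi)

lemma galAct_mk {n : ℕ} (g : K ≃ₐ[k] K) (w : Fin n → K) (hw : w ≠ 0) :
    galAct g (Projectivization.mk K w hw) =
      Projectivization.mk K (fun i => g (w i)) (comp_ne_zero g hw) := by
  obtain ⟨a, ha⟩ := (Projectivization.mk_eq_mk_iff K _ _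
    (Projectivization.mk K w hw).rep_nonzero hw).1 (Projectivization.mk_rep _)
  unfold galAct
  rw [Projectivization.mk_eq_mk_iff]
  refine ⟨Units.mk0 (g (a : K)) (by simp [Units.ne_zero a]), ?_⟩
  funext i
  have : (Projectivization.mk K w hw).rep i = (a : K) * w i := by
    rw [← ha]; simp [Units.smul_def]
  simp [this, map_mul, Units.smul_def, smul_eq_mul, Pi.smul_apply]

lemma galAct_one {n : ℕ} (P : ℙ K (Fin n → K)) : galAct (1 : K ≃ₐ[k] K) P = P := by
  conv_rhs => rw [← Projectivization.mk_rep P]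
  rw [← Projectivization.mk_rep P, galAct_mk]
  exact mk_eq_of_eq _ _ (by funext i; simp)

lemma galAct_comp {n : ℕ} (g h : K ≃ₐ[k] K) (P : ℙ K (Fin n → K)) :
    galAct g (galAct h P) = galAct (g * h) P := by
  conv_lhs => rw [← Projectivization.mk_rep P]
  conv_rhs => rw [← Projectivization.mk_rep P]
  rw [galAct_mk, galAct_mk, galAct_mk]
  exact mk_eq_of_eq _ _ (by funext i; simp)

lemma mulAct_eq {F : Type} [Field F] {n : ℕ} (A : Matrix (Fin n) (Fin n) F) (hA : IsUnit A)
    (P : ℙ F (Fin n → F)) (w : Fin n → F) (hw : w ≠ 0) (h : A.mulVec P.rep = w) :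
    mulAct A hA P = Projectivization.mk F w hw := by
  unfold mulAct
  exact mk_eq_of_eq _ _ h

lemma glAct_eq {n : ℕ} (M : GL (Fin n) k) (P : ℙ K (Fin n → K)) (w : Fin n → K) (hw : w ≠ 0)
    (h : ((M : Matrix (Fin n) (Fin n) k).map (algebraMap k K)).mulVec P.rep = w) :
    glAct M P = Projectivization.mk K w hw :=
  mulAct_eq _ _ _ _ hw h

lemma glActSelf_eq {F : Type} [Field F] {n : ℕ} (M : GL (Fin n) F) (P : ℙ F (Fin n → F))
    (w : Fin n → F) (hw : w ≠ 0) (h : (M : Matrix (Fin n) (Fin n) F).mulVec P.rep = w) :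
    glActSelf M P = Projectivization.mk F w hw :=
  mulAct_eq _ _ _ _ hw h

lemma isUnit_map_gl {n : ℕ} (M : GL (Fin n) k) :
    IsUnit ((M : Matrix (Fin n) (Fin n) k).map (algebraMap k K)) := by
  have h : IsUnit ((algebraMap k K).mapMatrix (M : Matrix (Fin n) (Fin n) k)) :=
    (Units.isUnit M).map (algebraMap k K).mapMatrix
  simpa [RingHom.mapMatrix_apply] using h

lemma mulVec_ne_zero {F : Type} [Field F] {n : ℕ} {A : Matrix (Fin n) (Fin n) F}
    (hA : IsUnit A) {w : Fin n → F} (hw : w ≠ 0) : A.mulVec w ≠ 0 := by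
  intro h
  apply hw
  have h1 : ((hA.unit⁻¹ : (Matrix (Fin n) (Fin n) F)ˣ) : Matrix (Fin n) (Fin n) F).mulVec
      (A.mulVec w) = 0 := by rw [h, Matrix.mulVec_zero]
  rw [Matrix.mulVec_mulVec] at h1
  have h2 := hA.unit.inv_mul
  rw [hA.unit_spec] at h2
  rwa [h2, Matrix.one_mulVec] at h1

lemma fixed_mem [PerfectField k] [IsAlgClosure k K] (x : K)
    (hx : ∀ g : K ≃ₐ[k] K, g x = x) : ∃ a : k, algebraMap k K a = x := by
  have halg : Algebra.IsAlgebraic k K := IsAlgClosure.isAlgebraic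
  haveI : IsAlgClosed K := IsAlgClosure.isAlgClosed k
  have hint : IsIntegral k x := (halg.isAlgebraic x).isIntegral
  have hirr := minpoly.irreducible hint
  have hsep : (minpoly k x).Separable := PerfectField.separable_of_irreducible hirr
  have hsplit : ((minpoly k x).map (algebraMap k K)).Splits :=
    IsAlgClosed.splits _
  have hcard : (minpoly k x).natDegree = Multiset.card ((minpoly k x).map (algebraMap k K)).roots := by
    rw [← Polynomial.natDegree_map (algebraMap k K)]; exact hsplit.natDegree_eq_card_roots
  have hroots : ∀ y ∈ ((minpoly k x).map (algebraMap k K)).roots, y = x := by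
    intro y hy
    have hev : Polynomial.aeval y (minpoly k x) = 0 := by
      have h1 := Polynomial.isRoot_of_mem_roots hy
      rwa [Polynomial.IsRoot, Polynomial.eval_map, ← Polynomial.aeval_def] at h1
    obtain ⟨σ, hσ⟩ := minpoly.exists_algEquiv_of_root (halg.isAlgebraic x) hev
    calc y = σ.symm (σ y) := (σ.symm_apply_apply y).symm
    _ = σ.symm x := by rw [hσ]
    _ = x := hx σ.symm
  classical
  have hnodup : ((minpoly k x).map (algebraMap k K)).roots.Nodup :=
    Polynomial.nodup_roots (hsep.map (f := algebraMap k K))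
  have hrep := Multiset.eq_replicate_card.mpr hroots
  have hle : Multiset.card ((minpoly k x).map (algebraMap k K)).roots ≤ 1 := by
    by_contra hgt
    push_neg at hgt
    rw [hrep] at hnodup
    rw [Multiset.nodup_iff_count_le_one] at hnodup
    have h3 := hnodup x
    rw [Multiset.count_replicate_self] at h3
    omega
  have hone : (minpoly k x).natDegree = 1 :=
    le_antisymm (hcard ▸ hle) (minpoly.natDegree_pos hint)
  obtain ⟨a, ha⟩ := minpoly.natDegree_eq_one_iff.mp hone
  exact ⟨a, ha⟩

end Aux

variable [PerfectField k] [IsAlgClosure k K]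

/-- Remark 6.15.
Let `{p₁,p₂,p₃} ⊆ ℙ²(K)` be a Galois orbit of size `3` whose points are not collinear, and
let `r ∈ ℙ²(k)`.  Then `α ↦ α(r)` is a bijection from the subgroup
`G = {α ∈ PGL₃(k) : α(pᵢ) = pᵢ for i = 1,2,3}` onto `ℙ²(k)`.  (Surjectivity and injectivity
are expressed at the level of matrices: two elements of `GL₃(k)` define the same element of
`PGL₃(k)` exactly when they differ by a scalar in `kˣ`.) -/
theorem stmt7 (p : Fin 3 → ℙ K (Fin 3 → K)) (hinj : Function.Injective p)
    (horb : Set.range p = {x | ∃ g : K ≃ₐ[k] K, x = galAct g (p 0)})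
    (hncol : LinearIndependent K (fun i => (p i).rep))
    (r : ℙ k (Fin 3 → k)) :
    (∀ r' : ℙ k (Fin 3 → k), ∃ M : GL (Fin 3) k,
        (∀ i, glAct M (p i) = p i) ∧ glActSelf M r = r') ∧
    (∀ M N : GL (Fin 3) k, (∀ i, glAct M (p i) = p i) → (∀ i, glAct N (p i) = p i) →
        glActSelf M r = glActSelf N r →
        ∃ u : kˣ, (N : Matrix (Fin 3) (Fin 3) k) = (u : k) • (M : Matrix (Fin 3) (Fin 3) k)) := by
  classical
  have hcard : Fintype.card (Fin 3) = Module.finrank K (Fin 3 → K) := by simp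
  set B : Module.Basis (Fin 3) K (Fin 3 → K) :=
    basisOfLinearIndependentOfCardEqFinrank hncol hcard with hBdef
  have hB : ∀ i, B i = (p i).rep := fun i =>
    congrFun (coe_basisOfLinearIndependentOfCardEqFinrank hncol hcard) i
  -- membership of galAct images in the orbit
  have hmem : ∀ (g : K ≃ₐ[k] K) (i : Fin 3), galAct g (p i) ∈ Set.range p := by
    intro g i
    have h0 : p i ∈ Set.range p := ⟨i, rfl⟩
    rw [horb] at h0
    obtain ⟨h, hh⟩ := h0
    rw [horb]
    exact ⟨g * h, by rw [hh, galAct_comp]⟩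
  have hgalinj : ∀ g : K ≃ₐ[k] K, Function.Injective
      (galAct g : ℙ K (Fin 3 → K) → ℙ K (Fin 3 → K)) := by
    intro g P Q h
    have h2 := congrArg (galAct (k := k) g⁻¹) h
    rwa [galAct_comp, galAct_comp, inv_mul_cancel, galAct_one, galAct_one] at h2
  -- the permutations induced by Galois elements
  have hE : ∀ g : K ≃ₐ[k] K, ∃ e : Equiv.Perm (Fin 3), ∀ i, galAct g (p i) = p (e i) := by
    intro g
    choose f hf using fun i => hmem g i
    have hfinj : Function.Injective f := by
      intro a b hab
      apply hinj
      apply hgalinj g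
      rw [← hf a, ← hf b, hab]
    exact ⟨Equiv.ofBijective f (Finite.injective_iff_bijective.mp hfinj),
      fun i => (hf i).symm⟩
  choose e he using hE
  -- the scalars
  have hC : ∀ (g : K ≃ₐ[k] K) (i : Fin 3), ∃ c : Kˣ,
      (fun j => g ((p i).rep j)) = (c : K) • (p (e g i)).rep := by
    intro g i
    have h1 : Projectivization.mk K (fun j => g ((p i).rep j))
          (comp_ne_zero g (p i).rep_nonzero)
        = Projectivization.mk K ((p (e g i)).rep) (Projectivization.rep_nonzero _) := by
      rw [← galAct_mk, Projectivization.mk_rep, Projectivization.mk_rep]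
      exact he g i
      exact (p i).rep_nonzero
    obtain ⟨a, ha⟩ := (Projectivization.mk_eq_mk_iff K _ _ _ _).1 h1
    exact ⟨a, ha.symm⟩
  choose c hc using hC
  -- transitivity
  have htrans : ∀ i : Fin 3, ∃ g : K ≃ₐ[k] K, e g 0 = i := by
    intro i
    have h0 : p i ∈ Set.range p := ⟨i, rfl⟩
    rw [horb] at h0
    obtain ⟨g, hg⟩ := h0
    exact ⟨g, hinj ((he g 0).symm.trans hg.symm)⟩
  -- coordinates of k-rational vectors
  set dd : (Fin 3 → k) → Fin 3 → K :=
    fun x i => B.repr (fun j => algebraMap k K (x j)) i with hdd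
  have hkey : ∀ (x : Fin 3 → k) (g : K ≃ₐ[k] K) (i : Fin 3),
      dd x (e g i) = g (dd x i) * (c g i : K) := by
    intro x g i
    set y : Fin 3 → K := fun j => algebraMap k K (x j) with hy
    have hgy : ∀ j, g (y j) = y j := fun j => g.commutes (x j)
    have h1 : ∀ j, y j = ∑ i, B.repr y i * B i j := by
      intro j
      conv_lhs => rw [← B.sum_repr y]
      simp [Finset.sum_apply, Pi.smul_apply, smul_eq_mul]
    have hvec : y = ∑ i, (g (B.repr y i) * (c g i : K)) • B (e g i) := by
      funext j
      calc y j = g (y j) := (hgy j).symm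
        _ = g (∑ i, B.repr y i * B i j) := by rw [← h1]
        _ = ∑ i, g (B.repr y i) * g (B i j) := by
            rw [map_sum]
            exact Finset.sum_congr rfl fun i _ => map_mul g _ _
        _ = ∑ i, g (B.repr y i) * ((c g i : K) * B (e g i) j) := by
            refine Finset.sum_congr rfl fun i _ => ?_
            have h2 := congrFun (hc g i) j
            rw [hB i, hB (e g i), h2]
            simp [Pi.smul_apply, smul_eq_mul]
        _ = (∑ i, (g (B.repr y i) * (c g i : K)) • B (e g i)) j := by
            simp [Finset.sum_apply, Pi.smul_apply, smul_eq_mul, mul_assoc]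
    have h2 : ∑ i, (g (B.repr y i) * (c g i : K)) • B (e g i)
        = ∑ i, (g (B.repr y ((e g).symm i)) * (c g ((e g).symm i) : K)) • B i := by
      rw [← Equiv.sum_comp (e g)
        (fun i => (g (B.repr y ((e g).symm i)) * (c g ((e g).symm i) : K)) • B i)]
      simp
    have h3 : (⇑(B.repr y) : Fin 3 → K)
        = fun i => g (B.repr y ((e g).symm i)) * (c g ((e g).symm i) : K) := by
      conv_lhs => rw [hvec, h2]
      exact B.repr_sum_self _
    have h5 := congrFun h3 (e g i)
    simp only [Equiv.symm_apply_apply] at h5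
    exact h5

  have hnz : ∀ (x : Fin 3 → k), x ≠ 0 → ∀ i, dd x i ≠ 0 := by
    intro x hx i hzero
    have h0 : dd x 0 = 0 := by
      obtain ⟨g, hg⟩ := htrans i
      have h1 := hkey x g 0
      rw [hg, hzero] at h1
      rcases mul_eq_zero.mp h1.symm with h2 | h2
      · exact g.injective (by simpa using h2)
      · exact absurd h2 (Units.ne_zero _)
    have hall : ∀ j, dd x j = 0 := by
      intro j
      obtain ⟨g', hg'⟩ := htrans j
      have h1 := hkey x g' 0
      rw [hg', h0] at h1
      simpa using h1
    apply hx
    have hrepr : B.repr (fun j => algebraMap k K (x j)) = 0 := by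
      ext j
      exact hall j
    have hy0 : (fun j => algebraMap k K (x j)) = 0 := by
      have := B.repr.map_eq_zero_iff.mp hrepr
      exact this
    funext j
    have hj := congrFun hy0 j
    exact (algebraMap k K).injective (by simpa using hj)
  -- matrices agreeing on the basis are equal
  have hmatext : ∀ (M1 M2 : Matrix (Fin 3) (Fin 3) K),
      (∀ i, M1.mulVec (B i) = M2.mulVec (B i)) → M1 = M2 := by
    intro M1 M2 h
    have h1 : Matrix.toLin' M1 = Matrix.toLin' M2 :=
      B.ext fun i => by rw [Matrix.toLin'_apply, Matrix.toLin'_apply]; exact h i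
    exact Matrix.toLin'.injective h1
  -- building a matrix in GL₃(k) from equivariant eigenvalues
  have hbuild : ∀ lam : Fin 3 → K, (∀ i, lam i ≠ 0) →
      (∀ (g : K ≃ₐ[k] K) (i : Fin 3), g (lam i) = lam (e g i)) →
      ∃ M : GL (Fin 3) k, ∀ i,
        ((M : Matrix (Fin 3) (Fin 3) k).map (algebraMap k K)).mulVec ((p i).rep)
          = lam i • (p i).rep := by
    intro lam hlne hleq
    set φ : (Fin 3 → K) →ₗ[K] (Fin 3 → K) := B.constr K (fun i => lam i • B i) with hphi
    set MK : Matrix (Fin 3) (Fin 3) K := LinearMap.toMatrix' φ with hMK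
    have hMKmul : ∀ w, MK.mulVec w = φ w := by
      intro w
      rw [hMK, ← Matrix.toLin'_apply, Matrix.toLin'_toMatrix']
    have hφB : ∀ i, φ (B i) = lam i • B i := fun i => B.constr_basis K _ i
    -- entries of MK are Galois fixed
    have hgfix : ∀ (g : K ≃ₐ[k] K) (a b : Fin 3), g (MK a b) = MK a b := by
      intro g a b
      have hgm : (Matrix.of fun a b => g (MK a b)) = MK := by
        apply hmatext
        intro i
        obtain ⟨i0, hi0⟩ : ∃ i0, e g i0 = i := ⟨(e g).symm i, (e g).apply_symm_apply i⟩
        subst hi0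
        have hgv : (fun j => g ((p i0).rep j)) = (c g i0 : K) • (p (e g i0)).rep := hc g i0
        have h1 : (Matrix.of fun a b => g (MK a b)).mulVec (fun j => g ((p i0).rep j))
            = fun j => g ((MK.mulVec (p i0).rep) j) := by
          funext a
          simp [Matrix.mulVec, dotProduct, map_sum, map_mul]
        have h2 : MK.mulVec (p i0).rep = lam i0 • (p i0).rep := by
          rw [hMKmul, ← hB, hφB, hB]
        have h3 : (fun j => g ((MK.mulVec (p i0).rep) j))
            = lam (e g i0) • ((c g i0 : K) • (p (e g i0)).rep) := by
          funext j
          rw [h2]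
          have h4 := congrFun hgv j
          simp only [Pi.smul_apply, smul_eq_mul, map_mul]
          rw [hleq g i0, h4]
          simp [Pi.smul_apply, smul_eq_mul]
        rw [hgv] at h1
        rw [Matrix.mulVec_smul] at h1
        have h5 : (Matrix.of fun a b => g (MK a b)).mulVec ((p (e g i0)).rep)
            = lam (e g i0) • (p (e g i0)).rep := by
          have h6 : (c g i0 : K) • (Matrix.of fun a b => g (MK a b)).mulVec ((p (e g i0)).rep)
              = (c g i0 : K) • (lam (e g i0) • (p (e g i0)).rep) := by
            rw [h1, h3, smul_comm]
          exact smul_right_injective _ (Units.ne_zero (c g i0)) h6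
        rw [hB]
        rw [h5, hMKmul, ← hB, hφB, hB]
      have := congrFun (congrFun hgm a) b
      simpa using this
    -- descend the matrix to k
    choose Mk hMk using fun a b => fixed_mem (MK a b) (fun g => hgfix g a b)
    set Mkm : Matrix (Fin 3) (Fin 3) k := Matrix.of Mk with hMkm
    have hmap : Mkm.map (algebraMap k K) = MK := by
      ext a b
      simp [hMkm, Matrix.map_apply, hMk a b]
    -- determinant
    have hdiag : LinearMap.toMatrix B B φ = Matrix.diagonal lam := by
      ext a b
      rw [LinearMap.toMatrix_apply, hφB]
      simp only [map_smul, Module.Basis.repr_self, Finsupp.smul_single, smul_eq_mul, mul_one,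
        Finsupp.single_apply, Matrix.diagonal_apply]
      by_cases hab : a = b <;> simp [hab, eq_comm]
    have hdet : MK.det = ∏ i, lam i := by
      rw [hMK, LinearMap.det_toMatrix' φ, ← LinearMap.det_toMatrix B, hdiag,
        Matrix.det_diagonal]
    have hdetk : Mkm.det ≠ 0 := by
      intro h0
      have h1 : (algebraMap k K) Mkm.det = MK.det := by
        rw [RingHom.map_det]
        rw [show (algebraMap k K).mapMatrix Mkm = Mkm.map (algebraMap k K) from rfl, hmap]
      rw [h0, map_zero, hdet] at h1
      exact (Finset.prod_ne_zero_iff.mpr fun i _ => hlne i) h1.symm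
    have hunit : IsUnit Mkm := (Matrix.isUnit_iff_isUnit_det _).mpr
      (isUnit_iff_ne_zero.mpr hdetk)
    refine ⟨hunit.unit, fun i => ?_⟩
    have hcoe : ((hunit.unit : GL (Fin 3) k) : Matrix (Fin 3) (Fin 3) k) = Mkm :=
      hunit.unit_spec
    rw [hcoe, hmap, hMKmul, ← hB, hφB, hB]

  -- pushing mulVec through the algebra map
  have hmapmv : ∀ (Mk : Matrix (Fin 3) (Fin 3) k) (w : Fin 3 → k),
      (fun j => algebraMap k K ((Mk.mulVec w) j))
        = (Mk.map (algebraMap k K)).mulVec (fun t => algebraMap k K (w t)) := by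
    intro Mk w
    funext j
    simp [Matrix.mulVec, dotProduct, map_sum, map_mul, Matrix.map_apply]
  constructor
  · intro r'
    set lam : Fin 3 → K := fun i => dd r'.rep i / dd r.rep i with hlamdef
    have hlamne : ∀ i, lam i ≠ 0 :=
      fun i => div_ne_zero (hnz r'.rep r'.rep_nonzero i) (hnz r.rep r.rep_nonzero i)
    have hlameq : ∀ (g : K ≃ₐ[k] K) (i : Fin 3), g (lam i) = lam (e g i) := by
      intro g i
      have h1 := hkey r'.rep g i
      have h2 := hkey r.rep g i
      rw [hlamdef]
      simp only
      rw [map_div₀, h1, h2, mul_div_mul_right _ _ (Units.ne_zero (c g i))]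
    obtain ⟨M, hM⟩ := hbuild lam hlamne hlameq
    refine ⟨M, fun i => ?_, ?_⟩
    · have h1 := glAct_eq M (p i) (lam i • (p i).rep)
        (smul_ne_zero (hlamne i) (p i).rep_nonzero) (hM i)
      rw [h1]
      have h2 : Projectivization.mk K (lam i • (p i).rep)
            (smul_ne_zero (hlamne i) (p i).rep_nonzero)
          = Projectivization.mk K ((p i).rep) (p i).rep_nonzero :=
        (Projectivization.mk_eq_mk_iff K _ _ _ _).mpr
          ⟨Units.mk0 (lam i) (hlamne i), by simp [Units.smul_def]⟩
      rw [h2, Projectivization.mk_rep]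
    · have hmv : (M : Matrix (Fin 3) (Fin 3) k).mulVec r.rep = r'.rep := by
        have h1 : ((M : Matrix (Fin 3) (Fin 3) k).map (algebraMap k K)).mulVec
            (fun j => algebraMap k K (r.rep j)) = fun j => algebraMap k K (r'.rep j) := by
          have hy : (fun j => algebraMap k K (r.rep j)) = ∑ i, dd r.rep i • B i :=
            (B.sum_repr _).symm
          have hy' : (fun j => algebraMap k K (r'.rep j)) = ∑ i, dd r'.rep i • B i :=
            (B.sum_repr _).symm
          rw [hy, hy', ← Matrix.toLin'_apply, map_sum]
          refine Finset.sum_congr rfl fun i _ => ?_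
          rw [map_smul, Matrix.toLin'_apply, hB, hM i, ← hB]
          rw [smul_smul, hlamdef]
          simp only
          rw [mul_div_cancel₀ _ (hnz r.rep r.rep_nonzero i)]
        funext j
        apply (algebraMap k K).injective
        have h2 := congrFun (hmapmv (M : Matrix (Fin 3) (Fin 3) k) r.rep) j
        rw [h2, h1]
      rw [glActSelf_eq M r r'.rep r'.rep_nonzero hmv, Projectivization.mk_rep]

  · intro M N hMfix hNfix hMN
    have hext : ∀ (P : GL (Fin 3) k), (∀ i, glAct P (p i) = p i) → ∀ i, ∃ u : Kˣ,
        ((P : Matrix (Fin 3) (Fin 3) k).map (algebraMap k K)).mulVec ((p i).rep)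
          = (u : K) • (p i).rep := by
      intro P hfix i
      have hne : ((P : Matrix (Fin 3) (Fin 3) k).map (algebraMap k K)).mulVec ((p i).rep) ≠ 0 :=
        mulVec_ne_zero (isUnit_map_gl P) (p i).rep_nonzero
      have h1 : Projectivization.mk K
            (((P : Matrix (Fin 3) (Fin 3) k).map (algebraMap k K)).mulVec ((p i).rep)) hne
          = Projectivization.mk K ((p i).rep) (p i).rep_nonzero :=
        (glAct_eq P (p i) _ hne rfl).symm.trans
          ((hfix i).trans (Projectivization.mk_rep (p i)).symm)
      obtain ⟨u, hu⟩ := (Projectivization.mk_eq_mk_iff K _ _ hne (p i).rep_nonzero).mp h1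
      exact ⟨u, hu.symm⟩
    choose lamM hlamM using hext M hMfix
    choose lamN hlamN using hext N hNfix
    have hMvne : (M : Matrix (Fin 3) (Fin 3) k).mulVec r.rep ≠ 0 :=
      mulVec_ne_zero (Units.isUnit M) r.rep_nonzero
    have hNvne : (N : Matrix (Fin 3) (Fin 3) k).mulVec r.rep ≠ 0 :=
      mulVec_ne_zero (Units.isUnit N) r.rep_nonzero
    have h1 : Projectivization.mk k ((M : Matrix (Fin 3) (Fin 3) k).mulVec r.rep) hMvne
        = Projectivization.mk k ((N : Matrix (Fin 3) (Fin 3) k).mulVec r.rep) hNvne :=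
      (glActSelf_eq M r _ hMvne rfl).symm.trans (hMN.trans (glActSelf_eq N r _ hNvne rfl))
    obtain ⟨t, ht⟩ := (Projectivization.mk_eq_mk_iff k _ _ _ _).mp h1
    have hcompute : ∀ (P : GL (Fin 3) k) (lamP : Fin 3 → Kˣ),
        (∀ i, ((P : Matrix (Fin 3) (Fin 3) k).map (algebraMap k K)).mulVec ((p i).rep)
          = (lamP i : K) • (p i).rep) →
        ((P : Matrix (Fin 3) (Fin 3) k).map (algebraMap k K)).mulVec
            (fun j => algebraMap k K (r.rep j))
          = ∑ i, (dd r.rep i * (lamP i : K)) • B i := by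
      intro P lamP hP
      have hy : (fun j => algebraMap k K (r.rep j)) = ∑ i, dd r.rep i • B i :=
        (B.sum_repr _).symm
      rw [hy, ← Matrix.toLin'_apply, map_sum]
      refine Finset.sum_congr rfl fun i _ => ?_
      rw [map_smul, Matrix.toLin'_apply, hB, hP i, ← hB, smul_smul]
    have hMc := hcompute M lamM hlamM
    have hNc := hcompute N lamN hlamN
    have hEq : ((M : Matrix (Fin 3) (Fin 3) k).map (algebraMap k K)).mulVec
          (fun j => algebraMap k K (r.rep j))
        = algebraMap k K (t : k) • (((N : Matrix (Fin 3) (Fin 3) k).map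
          (algebraMap k K)).mulVec (fun j => algebraMap k K (r.rep j))) := by
      rw [← hmapmv, ← hmapmv, ← ht]
      funext j
      simp [Pi.smul_apply, smul_eq_mul, map_mul, Units.smul_def]
    rw [hMc, hNc, Finset.smul_sum] at hEq
    simp_rw [smul_smul] at hEq
    have hEq2 : (fun i => dd r.rep i * (lamM i : K))
        = fun i => algebraMap k K (t : k) * (dd r.rep i * (lamN i : K)) := by
      have e1 : ⇑(B.repr (∑ i, (dd r.rep i * (lamM i : K)) • B i))
          = fun i => dd r.rep i * (lamM i : K) := B.repr_sum_self _
      have e2 : ⇑(B.repr (∑ i, (algebraMap k K (t : k) * (dd r.rep i * (lamN i : K))) • B i))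
          = fun i => algebraMap k K (t : k) * (dd r.rep i * (lamN i : K)) :=
        B.repr_sum_self _
      rw [← e1, ← e2, hEq]
    have hrel : ∀ i, (lamM i : K) = algebraMap k K (t : k) * (lamN i : K) := by
      intro i
      have h2 := congrFun hEq2 i
      have h3 : dd r.rep i * (lamM i : K)
          = dd r.rep i * (algebraMap k K (t : k) * (lamN i : K)) := by
        rw [h2]; ring
      exact mul_left_cancel₀ (hnz r.rep r.rep_nonzero i) h3
    have hNK : ((N : Matrix (Fin 3) (Fin 3) k).map (algebraMap k K))
        = algebraMap k K ((t⁻¹ : kˣ) : k) • ((M : Matrix (Fin 3) (Fin 3) k).map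
          (algebraMap k K)) := by
      apply hmatext
      intro i
      rw [hB, hlamN i, Matrix.smul_mulVec, hlamM i, smul_smul]
      congr 1
      rw [hrel i, ← mul_assoc, ← map_mul]
      have ht1 : ((t⁻¹ : kˣ) : k) * ((t : kˣ) : k) = 1 := by
        rw [← Units.val_mul, inv_mul_cancel, Units.val_one]
      rw [ht1, map_one, one_mul]
    refine ⟨t⁻¹, ?_⟩
    ext i j
    apply (algebraMap k K).injective
    have h4 := congrFun (congrFun hNK i) j
    rw [Matrix.map_apply] at h4
    rw [h4]
    simp [Matrix.map_apply, Matrix.smul_apply, smul_eq_mul, map_mul]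


end CremonaPaper
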